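/- arXiv:0910.3540 — 3 statements merged into one kernel-verified Lean document; each statement's English description precedes it below -/
import Mathlib

section
/- Let g be a complex Lie algebra and n a Lie subalgebra such that the adjoint n-module g/n is locally finite over n. Then for any n-module M that is locally finite over n, the induced g-module U(g) ⊗_{U(n)} M is locally finite over n. -/
/-!
The `n`-locally finite vectors of any `g`-module `P` form a `g`-submodule. Indeed, if `v` lies in a
finite-dimensional `n`-stable subspace `W` and `y ∈ g`, lift a finite-dimensional `n`-stable
subspace of `g/n` containing `y + n` to a finite-dimensional `V ≤ g` with `y ∈ n + V` and
`[n, V] ⊆ n + V`. Then `W + [V, W]` is finite-dimensional, contains `[y, v]`, and is `n`-stable by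
the Leibniz rule `[x, [a, w]] = [[x, a], w] + [a, [x, w]]`. In the induced module this submodule
contains the image of `M`, so by the universal property it is everything.
-/

universe u

open Submodule

namespace LieModule

variable (K L M : Type*) [Field K] [LieRing L] [AddCommGroup M] [Module K M] [LieRingModule L M]

def locallyFinitePart : Submodule K M where
  carrier := {v | ∃ W : Submodule K M, v ∈ W ∧ FiniteDimensional K W ∧
      ∀ (x : L), ∀ w ∈ W, ⁅x, w⁆ ∈ W}
  zero_mem' := ⟨⊥, zero_mem _, inferInstance, fun x w hw => by simp [(mem_bot K).mp hw]⟩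
  add_mem' := by
    rintro v₁ v₂ ⟨W₁, h₁, _, hinv₁⟩ ⟨W₂, h₂, _, hinv₂⟩
    refine ⟨W₁ ⊔ W₂, add_mem_sup h₁ h₂, inferInstance, fun x w hw => ?_⟩
    obtain ⟨a, ha, b, hb, rfl⟩ := mem_sup.mp hw
    rw [lie_add]
    exact add_mem_sup (hinv₁ x a ha) (hinv₂ x b hb)
  smul_mem' c _ := fun ⟨W, hv, hfd, hinv⟩ => ⟨W, W.smul_mem c hv, hfd, hinv⟩

variable {K L M}

theorem map_mem_locallyFinitePart {M' : Type*} [AddCommGroup M'] [Module K M']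
    [LieRingModule L M'] (f : M →ₗ⁅K,L⁆ M') {v : M}
    (hv : v ∈ locallyFinitePart K L M) : f v ∈ locallyFinitePart K L M' := by
  obtain ⟨W, hvW, _, hinv⟩ := hv
  refine ⟨W.map (f : M →ₗ[K] M'), mem_map_of_mem hvW, inferInstance, ?_⟩
  rintro x _ ⟨w, hw, rfl⟩
  change ⁅x, f w⁆ ∈ _
  rw [← f.map_lie]
  exact mem_map_of_mem (hinv x w hw)

end LieModule

namespace Submodule

variable {K E : Type*} [Field K] [AddCommGroup E] [Module K E]

theorem exists_finiteDimensional_sup_eq_comap_mkQ (p : Submodule K E) (W : Submodule K (E ⧸ p))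
    [FiniteDimensional K W] : ∃ V : Submodule K E, FiniteDimensional K V ∧
      p ⊔ V = W.comap p.mkQ := by
  obtain ⟨s, hs⟩ := p.mkQ.exists_rightInverse_of_surjective p.range_mkQ
  refine ⟨W.map s, inferInstance, ?_⟩
  rw [← comap_map_mkQ, ← map_comp, hs, map_id]

instance finiteDimensional_map₂ {F G : Type*} [AddCommGroup F] [Module K F] [AddCommGroup G]
    [Module K G] (f : E →ₗ[K] F →ₗ[K] G) (p : Submodule K E) (q : Submodule K F)
    [FiniteDimensional K p] [FiniteDimensional K q] : FiniteDimensional K (map₂ f p q) := by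
  rw [TensorProduct.map₂_eq_range_lift_comp_mapIncl]
  infer_instance

end Submodule

namespace LieSubalgebra

variable {K g P : Type*} [Field K] [LieRing g] [LieAlgebra K g]
  [AddCommGroup P] [Module K P] [LieRingModule g P] [LieModule K g P] {n : LieSubalgebra K g}

theorem exists_invariant_map₂_toEnd_le {V : Submodule K g} [FiniteDimensional K V]
    (hV : ∀ (x : n), ∀ a ∈ V, ⁅(x : g), a⁆ ∈ n.toSubmodule ⊔ V)
    {W : Submodule K P} [FiniteDimensional K W] (hW : ∀ (x : n), ∀ w ∈ W, ⁅(x : g), w⁆ ∈ W) :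
    ∃ U : Submodule K P, FiniteDimensional K U ∧ (∀ (x : n), ∀ u ∈ U, ⁅(x : g), u⁆ ∈ U) ∧
      map₂ (LieModule.toEnd K g P : g →ₗ[K] Module.End K P) (n.toSubmodule ⊔ V) W ≤ U := by
  set B : g →ₗ[K] Module.End K P := (LieModule.toEnd K g P : g →ₗ[K] Module.End K P)
  have hBn : map₂ B n.toSubmodule W ≤ W := map₂_le.mpr fun x hx w hw => hW ⟨x, hx⟩ w hw
  have hBV : map₂ B (n.toSubmodule ⊔ V) W ≤ W ⊔ map₂ B V W := by
    rw [map₂_sup_left]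
    exact sup_le_sup_right hBn _
  refine ⟨W ⊔ map₂ B V W, inferInstance, fun x => ?_, hBV⟩
  suffices W ⊔ map₂ B V W ≤ (W ⊔ map₂ B V W).comap (B x) from fun u hu => this hu
  refine sup_le (fun w hw => mem_sup_left (hW x w hw)) (map₂_le.mpr fun a ha w hw => ?_)
  change ⁅(x : g), ⁅a, w⁆⁆ ∈ W ⊔ map₂ B V W
  rw [leibniz_lie]
  exact add_mem (hBV (apply_mem_map₂ B (hV x a ha) hw))
    (mem_sup_right (apply_mem_map₂ B ha (hW x w hw)))

theorem lie_mem_locallyFinitePart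
    (hgn : ∀ y : g, ∃ W : Submodule K (g ⧸ n.toSubmodule), FiniteDimensional K W ∧
      Submodule.Quotient.mk y ∈ W ∧
      ∀ (x : n) (z : g), Submodule.Quotient.mk z ∈ W →
        (Submodule.Quotient.mk ⁅(x : g), z⁆ : g ⧸ n.toSubmodule) ∈ W)
    (y : g) {v : P} (hv : v ∈ LieModule.locallyFinitePart K n P) :
    ⁅y, v⁆ ∈ LieModule.locallyFinitePart K n P := by
  obtain ⟨W, hvW, _, hW⟩ := hv
  obtain ⟨W', _, hyW', hW'⟩ := hgn y
  obtain ⟨V, _, hV⟩ := exists_finiteDimensional_sup_eq_comap_mkQ n.toSubmodule W'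
  have hVn : ∀ (x : n), ∀ a ∈ V, ⁅(x : g), a⁆ ∈ n.toSubmodule ⊔ V := fun x a ha => by
    have ha' : a ∈ W'.comap n.mkQ := hV ▸ mem_sup_right ha
    rw [hV]
    exact hW' x a ha'
  obtain ⟨U, _, hU, hle⟩ := exists_invariant_map₂_toEnd_le hVn hW
  exact ⟨U, hle (apply_mem_map₂ _ (by rw [hV]; exact hyW') hvW), inferInstance, hU⟩

end LieSubalgebra

theorem LieSubmodule.eq_top_of_universal {K g M : Type*} {P : Type u} [Field K] [LieRing g]
    [LieAlgebra K g] {n : LieSubalgebra K g} [AddCommGroup M] [Module K M] [LieRingModule n M]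
    [AddCommGroup P] [Module K P] [LieRingModule g P] [LieModule K g P]
    (η : M →ₗ[K] P) (hη : ∀ (x : n) (m : M), η ⁅x, m⁆ = ⁅(x : g), η m⁆)
    (huniv : ∀ (Q : Type u) [AddCommGroup Q] [Module K Q] [LieRingModule g Q] [LieModule K g Q]
      (ψ : M →ₗ[K] Q), (∀ (x : n) (m : M), ψ ⁅x, m⁆ = ⁅(x : g), ψ m⁆) →
      ∃! Φ : P →ₗ⁅K,g⁆ Q, ∀ m : M, Φ (η m) = ψ m)
    (S : LieSubmodule K g P) (hS : ∀ m, η m ∈ S) : S = ⊤ := by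
  obtain ⟨Φ, hΦ, -⟩ := huniv S (η.codRestrict S.toSubmodule hS) fun x m => Subtype.ext (hη x m)
  obtain ⟨_, -, huniq⟩ := huniv P η hη
  have hsection : S.incl.comp Φ = LieModuleHom.id :=
    (huniq _ fun m => congrArg Subtype.val (hΦ m)).trans (huniq _ fun _ => rfl).symm
  refine eq_top_iff.mpr fun v _ => ?_
  rw [← LieModuleHom.id_apply (R := K) (L := g) v, ← hsection]
  exact (Φ v).2

theorem locallyFinite_induced_general
    {g : Type u} [LieRing g] [LieAlgebra ℂ g] (n : LieSubalgebra ℂ g)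
    (hgn : ∀ y : g, ∃ W : Submodule ℂ (g ⧸ n.toSubmodule), FiniteDimensional ℂ W ∧
      Submodule.Quotient.mk y ∈ W ∧
      ∀ (x : n) (z : g), Submodule.Quotient.mk z ∈ W →
        (Submodule.Quotient.mk ⁅(x : g), z⁆ : g ⧸ n.toSubmodule) ∈ W)
    (M : Type u) [AddCommGroup M] [Module ℂ M] [LieRingModule n M]
    (hM : ∀ v : M, ∃ W : Submodule ℂ M, v ∈ W ∧ FiniteDimensional ℂ W ∧
      ∀ (x : n), ∀ w ∈ W, ⁅x, w⁆ ∈ W)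
    -- `(P, η)` is the induced module `U(g) ⊗_{U(n)} M` with its canonical map `η(m) = 1 ⊗ m`:
    (P : Type u) [AddCommGroup P] [Module ℂ P] [LieRingModule g P] [LieModule ℂ g P]
    (η : M →ₗ[ℂ] P) (hη : ∀ (x : n) (m : M), η ⁅x, m⁆ = ⁅(x : g), η m⁆)
    (huniv : ∀ (Q : Type u) [AddCommGroup Q] [Module ℂ Q] [LieRingModule g Q] [LieModule ℂ g Q]
      (ψ : M →ₗ[ℂ] Q), (∀ (x : n) (m : M), ψ ⁅x, m⁆ = ⁅(x : g), ψ m⁆) →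
      ∃! Φ : P →ₗ⁅ℂ,g⁆ Q, ∀ m : M, Φ (η m) = ψ m) :
    ∀ v : P, ∃ W : Submodule ℂ P, v ∈ W ∧ FiniteDimensional ℂ W ∧
      ∀ (x : n), ∀ w ∈ W, ⁅(x : g), w⁆ ∈ W := by
  let S : LieSubmodule ℂ g P :=
    { LieModule.locallyFinitePart ℂ n P with
      lie_mem := fun hv => LieSubalgebra.lie_mem_locallyFinitePart hgn _ hv }
  let ηₙ : M →ₗ⁅ℂ,n⁆ P := { η with map_lie' := fun {x m} => hη x m }
  have hS : S = ⊤ := LieSubmodule.eq_top_of_universal η hη huniv S fun m =>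
    LieModule.map_mem_locallyFinitePart ηₙ (hM m)
  intro v
  exact (hS ▸ LieSubmodule.mem_top v : v ∈ S)

/-- Let `n` be a Lie subalgebra of `g` such that the adjoint `n`-module `g/n`
is locally finite over `n`.  If `M` is an `n`-module which is locally finite over `n`, then the
induced `g`-module `U(g) ⊗_{U(n)} M` — characterized here, together with the canonical
`n`-equivariant map `η : M → U(g) ⊗_{U(n)} M`, by its universal property — is locally finite
over `n`.  (A module is locally finite over `n` iff every vector lies in a finite-dimensional
`n`-invariant subspace, i.e. `U(n)·v` is finite dimensional for every `v`.) -/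
theorem locallyFinite_induced
    {g : Type u} [LieRing g] [LieAlgebra ℂ g] (n : LieSubalgebra ℂ g)
    (hgn : ∀ y : g, ∃ W : Submodule ℂ (g ⧸ n.toSubmodule), FiniteDimensional ℂ W ∧
      Submodule.Quotient.mk y ∈ W ∧
      ∀ (x : n) (z : g), Submodule.Quotient.mk z ∈ W →
        (Submodule.Quotient.mk ⁅(x : g), z⁆ : g ⧸ n.toSubmodule) ∈ W)
    (M : Type u) [AddCommGroup M] [Module ℂ M] [LieRingModule n M] [LieModule ℂ n M]
    (hM : ∀ v : M, ∃ W : Submodule ℂ M, v ∈ W ∧ FiniteDimensional ℂ W ∧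
      ∀ (x : n), ∀ w ∈ W, ⁅x, w⁆ ∈ W)
    -- `(P, η)` is the induced module `U(g) ⊗_{U(n)} M` with its canonical map `η(m) = 1 ⊗ m`:
    (P : Type u) [AddCommGroup P] [Module ℂ P] [LieRingModule g P] [LieModule ℂ g P]
    (η : M →ₗ[ℂ] P) (hη : ∀ (x : n) (m : M), η ⁅x, m⁆ = ⁅(x : g), η m⁆)
    (huniv : ∀ (Q : Type u) [AddCommGroup Q] [Module ℂ Q] [LieRingModule g Q] [LieModule ℂ g Q]
      (ψ : M →ₗ[ℂ] Q), (∀ (x : n) (m : M), ψ ⁅x, m⁆ = ⁅(x : g), ψ m⁆) →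
      ∃! Φ : P →ₗ⁅ℂ,g⁆ Q, ∀ m : M, Φ (η m) = ψ m) :
    ∀ v : P, ∃ W : Submodule ℂ P, v ∈ W ∧ FiniteDimensional ℂ W ∧
      ∀ (x : n), ∀ w ∈ W, ⁅(x : g), w⁆ ∈ W :=
  locallyFinite_induced_general n hgn M hM P η hη huniv
end

section
/- Let (g, n) be a Whittaker pair and M a g-module locally finite over n. If M is generated by a Whittaker vector v of type λ, and v is (up to scalar) the unique nonzero Whittaker vector in M, then M is a simple g-module. -/
attribute [local instance 100] LieRing.ofAssociativeRing

/-!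
For `z ∈ n` let `τ_z = ρ(z) - λ(z)`. Filter `M` by `F₀ = ℂ v` and `F_{s+1} = F_s + g · F_s`.
Each `F_s` is `n`-stable, and since `ad z` is locally nilpotent modulo `n`, the Leibniz rule
`τ_z (a · u) = a · τ_z u + [z, a] · u` shows that high powers of `τ_z` push `F_{s+1}` into `F_s`.
As `v` generates `M`, every `τ_z` is therefore locally nilpotent on `M`.

A nonzero submodule `N` meets a finite-dimensional `n`-stable subspace `W` nontrivially. All `τ_z`
are nilpotent on `W ∩ N`, so Engel's theorem yields a Whittaker vector of type `λ` in `N`. By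
uniqueness it is a nonzero multiple of `v`, hence `N = M`.
-/

theorem Submodule.mem_iSup_comap_pow_iff {R M : Type*} [CommRing R] [AddCommGroup M]
    [Module R M] {f : Module.End R M} {T : Submodule R M} (hT : ∀ u ∈ T, f u ∈ T) {u : M} :
    u ∈ ⨆ k, T.comap (f ^ k) ↔ ∃ k, (f ^ k) u ∈ T := by
  refine mem_iSup_of_directed _ (Monotone.directed_le (monotone_nat_of_le_succ fun k u hu ↦ ?_))
  rw [mem_comap, pow_succ', Module.End.mul_apply]
  exact hT _ hu

namespace LieModule

variable {R L M : Type*} [CommRing R] [LieRing L] [LieAlgebra R L]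
  [AddCommGroup M] [Module R M] [LieRingModule L M] [LieModule R L M]

def shiftedToEnd (χ : L →ₗ⁅R⁆ R) : L →ₗ⁅R⁆ Module.End R M where
  toFun x := toEnd R L M x - χ x • 1
  map_add' x y := by simp only [map_add, add_smul]; abel
  map_smul' t x := by simp [smul_sub, smul_smul]
  map_lie' {x y} := by
    simp only [LieHom.map_lie, Ring.lie_def, mul_comm (χ y), sub_self, zero_smul, sub_zero,
      sub_mul, mul_sub, smul_mul_assoc, mul_smul_comm, one_mul, mul_one, smul_sub, smul_smul]
    abel

@[simp]
lemma shiftedToEnd_apply (χ : L →ₗ⁅R⁆ R) (x : L) (m : M) :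
    shiftedToEnd χ x m = ⁅x, m⁆ - χ x • m := rfl

theorem exists_forall_lie_eq_smul_of_isNilpotent_shiftedToEnd {K : Type*} [Field K]
    [LieAlgebra K L] [Module K M] [LieModule K L M] [FiniteDimensional K M] [Nontrivial M]
    (χ : L →ₗ⁅K⁆ K) (hχ : ∀ x, _root_.IsNilpotent (shiftedToEnd χ x : Module.End K M)) :
    ∃ m : M, m ≠ 0 ∧ ∀ x, ⁅x, m⁆ = χ x • m := by
  let A := (shiftedToEnd (M := M) χ).range
  have : IsNilpotent A M := isNilpotent_iff_forall'.mpr (by rintro ⟨_, x, rfl⟩; exact hχ x)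
  have := nontrivial_max_triv_of_isNilpotent K A M
  obtain ⟨⟨m, hm⟩, hm0⟩ := exists_ne (0 : maxTrivSubmodule K A M)
  refine ⟨m, by simpa using hm0, fun x ↦ ?_⟩
  have := (mem_maxTrivSubmodule K A M m).1 hm ⟨_, LieHom.mem_range_self _ x⟩
  simpa [sub_eq_zero] using this

end LieModule

open LieModule in
theorem LieSubmodule.exists_forall_lie_eq_smul_of_ne_bot {K L M : Type*} [Field K] [LieRing L]
    [LieAlgebra K L] [AddCommGroup M] [Module K M] [LieRingModule L M] [LieModule K L M]
    (χ : L →ₗ⁅K⁆ K) (hχ : ∀ (x : L) (m : M), ∃ k, (shiftedToEnd χ x ^ k) m = 0)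
    (V : LieSubmodule K L M) [FiniteDimensional K V] (hV : V ≠ ⊥) :
    ∃ m ∈ V, m ≠ 0 ∧ ∀ x, ⁅x, m⁆ = χ x • m := by
  have := (nontrivial_iff_ne_bot K L M).2 hV
  have hincl (x : L) (k : ℕ) := Module.End.commute_pow_left_of_commute
    (f := V.incl.toLinearMap) (g := shiftedToEnd χ x) (g₂ := shiftedToEnd χ x) (by ext; rfl) k
  obtain ⟨⟨m, hmV⟩, hm0, hm⟩ := exists_forall_lie_eq_smul_of_isNilpotent_shiftedToEnd (M := V) χ
    fun x ↦ Module.End.isNilpotent_iff_of_finite.2 fun u ↦ by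
      obtain ⟨k, hk⟩ := hχ x u
      exact ⟨k, Subtype.ext ((LinearMap.congr_fun (hincl x k) u).symm.trans hk)⟩
  exact ⟨m, hmV, by simpa using hm0, fun x ↦ congr_arg Subtype.val (hm x)⟩

namespace Submodule

variable {R L M : Type*} [CommRing R] [LieRing L] [AddCommGroup M] [Module R M]
  [LieRingModule L M]

variable (L) in
def lieStep (P : Submodule R M) : Submodule R M :=
  P ⊔ span R {m | ∃ a : L, ∃ u ∈ P, ⁅a, u⁆ = m}

lemma le_lieStep (P : Submodule R M) : P ≤ lieStep L P := le_sup_left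

lemma lie_mem_lieStep {P : Submodule R M} (a : L) {u : M} (hu : u ∈ P) : ⁅a, u⁆ ∈ lieStep L P :=
  mem_sup_right (subset_span ⟨a, u, hu, rfl⟩)

variable (L) in
lemma monotone_iterate_lieStep (P : Submodule R M) : Monotone fun s ↦ (lieStep L)^[s] P :=
  monotone_nat_of_le_succ fun s ↦ by
    rw [Function.iterate_succ_apply']
    exact le_lieStep _

theorem exists_mem_iterate_lieStep_of_mem_lieSpan {s : Set M} {m : M}
    (hm : m ∈ LieSubmodule.lieSpan R L s) : ∃ k, m ∈ (lieStep L)^[k] (span R s) := by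
  induction hm using LieSubmodule.lieSpan_induction with
  | mem m hm => exact ⟨0, subset_span hm⟩
  | zero => exact ⟨0, zero_mem _⟩
  | add m m' _ _ ih ih' =>
    obtain ⟨k, hk⟩ := ih
    obtain ⟨k', hk'⟩ := ih'
    exact ⟨max k k', add_mem (monotone_iterate_lieStep L _ (le_max_left k k') hk)
      (monotone_iterate_lieStep L _ (le_max_right k k') hk')⟩
  | smul t m _ ih =>
    obtain ⟨k, hk⟩ := ih
    exact ⟨k, smul_mem _ t hk⟩
  | lie a m _ ih =>
    obtain ⟨k, hk⟩ := ih
    refine ⟨k + 1, ?_⟩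
    rw [Function.iterate_succ_apply']
    exact lie_mem_lieStep a hk

lemma lie_mem_lieStep_of_lie_mem [LieAlgebra R L] [LieModule R L M] {H : LieSubalgebra R L}
    {P : Submodule R M} (hP : ∀ x : H, ∀ u ∈ P, ⁅x, u⁆ ∈ P) (x : H) {u : M} (hu : u ∈ lieStep L P) :
    ⁅x, u⁆ ∈ lieStep L P := by
  suffices lieStep L P ≤ (lieStep L P).comap (LieModule.toEnd R H M x) from this hu
  refine sup_le (fun u hu ↦ le_lieStep P (hP x u hu)) (span_le.2 ?_)
  rintro _ ⟨a, u, hu, rfl⟩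
  simp only [SetLike.mem_coe, mem_comap, LieModule.toEnd_apply_apply,
    LieSubalgebra.coe_bracket_of_module, leibniz_lie (x : L) a u]
  exact add_mem (lie_mem_lieStep _ hu) (lie_mem_lieStep a (hP x u hu))

end Submodule

namespace LieModule

open Submodule

variable {R L M : Type*} [CommRing R] [LieRing L] [LieAlgebra R L]
  [AddCommGroup M] [Module R M] [LieRingModule L M] [LieModule R L M]
  {H : LieSubalgebra R L} (χ : H →ₗ⁅R⁆ R) {T G : Submodule R M}

lemma shiftedToEnd_apply_lie (z : H) (a : L) (m : M) :
    shiftedToEnd χ z ⁅a, m⁆ = ⁅a, shiftedToEnd χ z m⁆ + ⁅⁅(z : L), a⁆, m⁆ := by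
  simp only [shiftedToEnd_apply, LieSubalgebra.coe_bracket_of_module, leibniz_lie (z : L) a m,
    lie_sub, lie_smul]
  abel

lemma shiftedToEnd_mem (hT : ∀ x : H, ∀ u ∈ T, ⁅x, u⁆ ∈ T) (z : H) {u : M} (hu : u ∈ T) :
    shiftedToEnd χ z u ∈ T :=
  sub_mem (hT z u hu) (T.smul_mem _ hu)

lemma shiftedToEnd_pow_mem (hT : ∀ x : H, ∀ u ∈ T, ⁅x, u⁆ ∈ T) (z : H) (k : ℕ) {u : M}
    (hu : u ∈ T) : (shiftedToEnd χ z ^ k) u ∈ T := by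
  induction k with
  | zero => exact hu
  | succ k ih =>
    rw [pow_succ', Module.End.mul_apply]
    exact shiftedToEnd_mem χ hT z ih

/-- Each application of `τ_z` either lowers the `ad z`-index of `a` or moves `w` one step
towards `G`; after `k + b` steps every term has reached `T`. -/
theorem shiftedToEnd_pow_add_lie_mem (hT : ∀ x : H, ∀ u ∈ T, ⁅x, u⁆ ∈ T)
    (hG : ∀ a : L, ∀ u ∈ G, ⁅a, u⁆ ∈ T) (z : H) :
    ∀ {k : ℕ} {a : L}, (LieAlgebra.ad R L z ^ k) a ∈ H → ∀ {b : ℕ} {w : M}, w ∈ T →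
      (shiftedToEnd χ z ^ b) w ∈ G → (shiftedToEnd χ z ^ (k + b)) ⁅a, w⁆ ∈ T
  | 0, a, ha, b, w, hw, _ => by
    rw [zero_add]
    exact shiftedToEnd_pow_mem χ hT z b (hT ⟨a, ha⟩ w hw)
  | k + 1, a, _, 0, w, _, hwb => shiftedToEnd_pow_mem χ hT z _ (hG a w hwb)
  | k + 1, a, ha, b + 1, w, hw, hwb => by
    rw [show k + 1 + (b + 1) = k + 1 + b + 1 by omega, pow_succ, Module.End.mul_apply,
      shiftedToEnd_apply_lie, map_add]
    rw [pow_succ, Module.End.mul_apply] at ha hwb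
    refine add_mem (shiftedToEnd_pow_add_lie_mem hT hG z ?_ (shiftedToEnd_mem χ hT z hw) hwb) ?_
    · rwa [pow_succ, Module.End.mul_apply]
    · rw [show k + 1 + b = k + (b + 1) by omega]
      refine shiftedToEnd_pow_add_lie_mem hT hG z ha hw ?_
      rwa [pow_succ, Module.End.mul_apply]

theorem exists_shiftedToEnd_pow_mem_of_mem_lieStep (hT : ∀ x : H, ∀ u ∈ T, ⁅x, u⁆ ∈ T)
    (hG : ∀ a : L, ∀ u ∈ G, ⁅a, u⁆ ∈ T) (z : H)
    (hz : ∀ a : L, ∃ k, (LieAlgebra.ad R L z ^ k) a ∈ H)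
    (hTG : ∀ u ∈ T, ∃ b, (shiftedToEnd χ z ^ b) u ∈ G) {u : M} (hu : u ∈ lieStep L T) :
    ∃ b, (shiftedToEnd χ z ^ b) u ∈ T := by
  rw [← mem_iSup_comap_pow_iff fun _ ↦ shiftedToEnd_mem χ hT z]
  refine (show lieStep L T ≤ _ from sup_le (fun u hu ↦ ?_) (span_le.2 ?_)) hu
  · exact mem_iSup_of_mem 0 (by simpa using hu)
  · rintro _ ⟨a, w, hw, rfl⟩
    obtain ⟨k, hk⟩ := hz a
    obtain ⟨b, hb⟩ := hTG w hw
    exact mem_iSup_of_mem (k + b) (shiftedToEnd_pow_add_lie_mem χ hT hG z hk hw hb)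

theorem exists_shiftedToEnd_pow_eq_zero_of_lieSpan_eq_top (z : H)
    (hz : ∀ a : L, ∃ k, (LieAlgebra.ad R L z ^ k) a ∈ H) {v : M}
    (hv : ∀ x : H, ⁅x, v⁆ = χ x • v) (hgen : LieSubmodule.lieSpan R L {v} = ⊤) (m : M) :
    ∃ k, (shiftedToEnd χ z ^ k) m = 0 := by
  set F : ℕ → Submodule R M := fun s ↦ (lieStep L)^[s] (R ∙ v)
  have hF_succ (s : ℕ) : F (s + 1) = lieStep L (F s) := Function.iterate_succ_apply' _ _ _
  have hF_zero : ∀ u ∈ F 0, shiftedToEnd χ z u = 0 := by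
    intro u hu
    obtain ⟨c, rfl⟩ := mem_span_singleton.1 hu
    simp [hv]
  have hFH (s : ℕ) : ∀ x : H, ∀ u ∈ F s, ⁅x, u⁆ ∈ F s := by
    induction s with
    | zero =>
      intro x u hu
      obtain ⟨c, rfl⟩ := mem_span_singleton.1 hu
      rw [lie_smul, hv, smul_smul]
      exact smul_mem _ _ (mem_span_singleton_self v)
    | succ s ih => rw [hF_succ]; exact fun x u ↦ lie_mem_lieStep_of_lie_mem ih x
  have hdescent (s : ℕ) : ∀ u ∈ F (s + 1), ∃ b, (shiftedToEnd χ z ^ b) u ∈ F s := by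
    rw [hF_succ]
    induction s with
    | zero =>
      exact fun u ↦ exists_shiftedToEnd_pow_mem_of_mem_lieStep χ (hFH 0) (G := ⊥) (by simp) z hz
        fun u hu ↦ ⟨1, by simpa using hF_zero u hu⟩
    | succ s ih =>
      exact fun u ↦ exists_shiftedToEnd_pow_mem_of_mem_lieStep χ (hFH (s + 1)) (G := F s)
        (fun a u hu ↦ hF_succ s ▸ lie_mem_lieStep a hu) z hz (hF_succ s ▸ ih)
  have hnil (s : ℕ) : ∀ u ∈ F s, ∃ k, (shiftedToEnd χ z ^ k) u = 0 := by
    induction s with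
    | zero => exact fun u hu ↦ ⟨1, by simpa using hF_zero u hu⟩
    | succ s ih =>
      intro u hu
      obtain ⟨b, hb⟩ := hdescent s u hu
      obtain ⟨k, hk⟩ := ih _ hb
      exact ⟨k + b, by rw [pow_add, Module.End.mul_apply, hk]⟩
  obtain ⟨s, hs⟩ := exists_mem_iterate_lieStep_of_mem_lieSpan (hgen ▸ LieSubmodule.mem_top m)
  exact hnil s m hs

end LieModule

theorem simple_of_unique_whittaker_generator_general
    {g : Type*} [LieRing g] [LieAlgebra ℂ g] (n : LieSubalgebra ℂ g)
    (hln : ∀ (x : n) (y : g), ∃ k : ℕ, ((LieAlgebra.ad ℂ g (x : g)) ^ k) y ∈ n.toSubmodule)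
    (lam : n →ₗ⁅ℂ⁆ ℂ)
    (M : Type*) [AddCommGroup M] [Module ℂ M] [LieRingModule g M] [LieModule ℂ g M]
    (hM : ∀ v : M, ∃ W : Submodule ℂ M, v ∈ W ∧ FiniteDimensional ℂ W ∧
      ∀ (x : n), ∀ w ∈ W, ⁅(x : g), w⁆ ∈ W)
    (v : M) (hv0 : v ≠ 0)
    (hvW : ∀ x : n, ⁅(x : g), v⁆ = lam x • v)
    (hgen : LieSubmodule.lieSpan ℂ g {v} = ⊤)
    (huniq : ∀ w : M, (∀ x : n, ⁅(x : g), w⁆ = lam x • w) → ∃ c : ℂ, w = c • v) :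
    LieModule.IsIrreducible ℂ g M := by
  have : Nontrivial M := ⟨⟨v, 0, hv0⟩⟩
  refine LieModule.IsIrreducible.mk fun N hN ↦ ?_
  obtain ⟨w, hwN, hw0⟩ : ∃ w ∈ N, w ≠ 0 := by simpa [LieSubmodule.eq_bot_iff] using hN
  obtain ⟨W, hwW, hWfin, hWn⟩ := hM w
  let V : LieSubmodule ℂ n M := { W ⊓ N.toSubmodule with
    lie_mem := fun {x u} hu ↦ ⟨hWn x u hu.1, N.lie_mem hu.2⟩ }
  have : FiniteDimensional ℂ V :=
    Submodule.finiteDimensional_of_le (inf_le_left (b := N.toSubmodule))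
  obtain ⟨u, ⟨-, huN⟩, hu0, hu⟩ := LieSubmodule.exists_forall_lie_eq_smul_of_ne_bot lam
    (fun x ↦ LieModule.exists_shiftedToEnd_pow_eq_zero_of_lieSpan_eq_top lam x (hln x) hvW hgen) V
    fun hV ↦ hw0 ((LieSubmodule.eq_bot_iff V).1 hV w ⟨hwW, hwN⟩)
  obtain ⟨c, rfl⟩ := huniq u hu
  have hvN : v ∈ N := by
    simpa [smul_ne_zero_iff.1 hu0 |>.1] using N.smul_mem c⁻¹ huN
  rw [eq_top_iff, ← hgen, LieSubmodule.lieSpan_le]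
  simpa using hvN

/-- Let `(g, n)` be a Whittaker pair and `M` a `g`-module locally finite
over `n`.  If `M` is generated by a Whittaker vector `v` of type `λ`, and `v` is (up to
scalar) the unique nonzero Whittaker vector in `M`, then `M` is a simple `g`-module. -/
theorem simple_of_unique_whittaker_generator
    {g : Type*} [LieRing g] [LieAlgebra ℂ g] (n : LieSubalgebra ℂ g)
    (hqn : (⨅ i : ℕ, LieModule.lowerCentralSeries ℂ n n i) = ⊥)
    (hln : ∀ (x : n) (y : g), ∃ k : ℕ, ((LieAlgebra.ad ℂ g (x : g)) ^ k) y ∈ n.toSubmodule)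
    (lam : n →ₗ⁅ℂ⁆ ℂ)
    (M : Type*) [AddCommGroup M] [Module ℂ M] [LieRingModule g M] [LieModule ℂ g M]
    (hM : ∀ v : M, ∃ W : Submodule ℂ M, v ∈ W ∧ FiniteDimensional ℂ W ∧
      ∀ (x : n), ∀ w ∈ W, ⁅(x : g), w⁆ ∈ W)
    (v : M) (hv0 : v ≠ 0)
    (hvW : ∀ x : n, ⁅(x : g), v⁆ = lam x • v)
    (hgen : LieSubmodule.lieSpan ℂ g {v} = ⊤)
    (huniq : ∀ w : M, (∀ x : n, ⁅(x : g), w⁆ = lam x • w) → ∃ c : ℂ, w = c • v) :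
    LieModule.IsIrreducible ℂ g M :=
  simple_of_unique_whittaker_generator_general n hln lam M hM v hv0 hvW hgen huniq
end

section
/- Let g be the two-dimensional complex Lie algebra with basis {a, b} and bracket [a,b] = b, and let λ ∈ ℂ with λ ≠ 0. Then the g-module M_λ = U(g)/U(g)(b − λ) is simple. -/
/-!
The map `p ↦ p(a) · 1̄` identifies `ℂ[X]` with `M_λ = U(g) ⧸ U(g)(b - λ)`: it is
onto because `b p(a) = p(a - 1) b` and `b ≡ λ` modulo the ideal, and it is injective because
`a ↦ X · _`, `b ↦ λ · (_ ∘ (X - 1))` is a representation of `g` on `ℂ[X]` in which `b - λ` kills `1`.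
Under this identification `a` acts by multiplication by `X` and `λ⁻¹ b` by the shift
`f ↦ f(X - 1)`. A nonzero subspace of `ℂ[X]` stable under both contains `1`, since
`f - f(X - 1)` is nonzero of smaller degree as long as `f` is not constant; so it is everything.
-/

open Polynomial UniversalEnvelopingAlgebra

namespace Polynomial

theorem natDegree_eq_zero_of_comp_X_sub_C_eq {R : Type*} [CommRing R] [IsDomain R] [CharZero R]
    {f : R[X]} {r : R} (hr : r ≠ 0) (h : f.comp (X - C r) = f) : f.natDegree = 0 := by
  have hper : Function.Periodic (fun x => f.eval x) (-r) := fun x => by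
    simpa [sub_eq_add_neg] using congrArg (eval x) h
  have hinj : Function.Injective (fun n : ℕ => (n : R) * -r) :=
    (mul_left_injective₀ (neg_ne_zero.mpr hr)).comp Nat.cast_injective
  have hconst : f = C (f.eval 0) := by
    refine eq_of_infinite_eval_eq _ _ ((Set.infinite_range_of_injective hinj).mono ?_)
    rintro _ ⟨n, rfl⟩
    simpa using hper.nat_mul_eq n
  rw [hconst, natDegree_C]

theorem degree_sub_comp_X_sub_C_lt {R : Type*} [CommRing R] {f : R[X]} (hf : f ≠ 0) (r : R) :
    (f - f.comp (X - C r)).degree < f.degree := by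
  have htaylor : f.comp (X - C r) = taylor (-r) f := by
    rw [taylor_apply, C_neg, sub_eq_add_neg]
  exact degree_sub_lt_left (by rw [htaylor, degree_taylor]) hf
    (by rw [htaylor, leadingCoeff_taylor])

theorem mul_mem_of_X_mul_mem {R : Type*} [CommRing R] {W : Submodule R R[X]}
    (hX : ∀ f ∈ W, X * f ∈ W) (p : R[X]) {f : R[X]} (hf : f ∈ W) : p * f ∈ W := by
  induction p using Polynomial.induction_on with
  | C a => simpa [C_mul'] using W.smul_mem a hf
  | add p q hp hq => simpa [add_mul] using W.add_mem hp hq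
  | monomial n a ih => simpa [pow_succ, mul_assoc, mul_left_comm _ X] using hX _ ih

theorem eq_top_of_X_mul_mem_of_comp_X_sub_C_mem {K : Type*} [Field K] [CharZero K]
    {W : Submodule K K[X]} (hW : W ≠ ⊥) {r : K} (hr : r ≠ 0) (hX : ∀ f ∈ W, X * f ∈ W)
    (hshift : ∀ f ∈ W, f.comp (X - C r) ∈ W) : W = ⊤ := by
  have hone : ∀ n, ∀ f ∈ W, f ≠ 0 → f.natDegree = n → (1 : K[X]) ∈ W := by
    intro n
    induction n using Nat.strong_induction_on with
    | _ n ih =>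
      intro f hfW hf hn
      by_cases hconst : n = 0
      · obtain ⟨c, rfl⟩ := natDegree_eq_zero.mp (hn.trans hconst)
        have hc : c ≠ 0 := by rintro rfl; exact hf C_0
        simpa [smul_C, hc] using W.smul_mem c⁻¹ hfW
      · have hdiff : f - f.comp (X - C r) ≠ 0 := fun h =>
          hconst (hn ▸ natDegree_eq_zero_of_comp_X_sub_C_eq hr (sub_eq_zero.mp h).symm)
        exact ih _ (hn ▸ natDegree_lt_natDegree hdiff (degree_sub_comp_X_sub_C_lt hf r)) _
          (W.sub_mem hfW (hshift f hfW)) hdiff rfl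
  obtain ⟨f, hfW, hf⟩ := W.exists_mem_ne_zero_of_ne_bot hW
  refine eq_top_iff.mpr fun p _ => ?_
  simpa using mul_mem_of_X_mul_mem hX p (hone _ f hfW hf rfl)

end Polynomial

theorem isSimpleModule_of_polynomialEquiv {K A M : Type*} [Field K] [CharZero K] [Ring A]
    [Algebra K A] [AddCommGroup M] [Module A M] [Module K M] [IsScalarTower K A M]
    (Φ : K[X] ≃ₗ[K] M) {r : K} (hr : r ≠ 0) (x y : A) (hx : ∀ p, Φ (X * p) = x • Φ p)
    (hy : ∀ p, Φ (p.comp (X - C r)) = y • Φ p) : IsSimpleModule A M := by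
  have : Nontrivial M := Φ.symm.toEquiv.nontrivial
  refine { eq_bot_or_eq_top := fun N => ?_ }
  let W : Submodule K K[X] := (N.restrictScalars K).comap Φ.toLinearMap
  rcases eq_or_ne W ⊥ with hW | hW
  · refine Or.inl (eq_bot_iff.mpr fun m hm => ?_)
    have : Φ.symm m ∈ W := by simpa [W] using hm
    simpa [hW] using this
  · have hWtop := eq_top_of_X_mul_mem_of_comp_X_sub_C_mem hW hr
      (fun f hf => by simpa [W, hx] using N.smul_mem x hf)
      (fun f hf => by simpa [W, hy] using N.smul_mem y hf)
    refine Or.inr (eq_top_iff.mpr fun m _ => ?_)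
    have : Φ.symm m ∈ W := hWtop ▸ Submodule.mem_top
    simpa [W] using this

theorem SemiconjBy.mul_aeval {R A : Type*} [CommSemiring R] [Semiring A] [Algebra R A]
    {x x' y : A} (h : SemiconjBy y x x') (p : R[X]) : y * aeval x p = aeval x' p * y := by
  induction p using Polynomial.induction_on' with
  | add p q hp hq => rw [map_add, map_add, mul_add, add_mul, hp, hq]
  | monomial n c =>
    simp only [aeval_monomial, ← mul_assoc, (Algebra.commutes c y).symm]
    rw [mul_assoc, (h.pow_right n).eq, mul_assoc]

theorem Submodule.smul_mem_of_adjoin_eq_top {R A M : Type*} [CommSemiring R] [Semiring A]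
    [Algebra R A] [AddCommMonoid M] [Module R M] [Module A M] [IsScalarTower R A M] {s : Set A}
    (hs : Algebra.adjoin R s = ⊤) {N : Submodule R M} (hN : ∀ x ∈ s, ∀ m ∈ N, x • m ∈ N)
    (u : A) {m : M} (hm : m ∈ N) : u • m ∈ N := by
  induction (hs ▸ Algebra.mem_top : u ∈ Algebra.adjoin R s) using Algebra.adjoin_induction
    generalizing m with
  | mem x hx => exact hN x hx m hm
  | algebraMap r => simpa [algebraMap_smul] using N.smul_mem r hm
  | add x y _ _ hx hy => simpa [add_smul] using N.add_mem (hx hm) (hy hm)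
  | mul x y _ _ hx hy => simpa [mul_smul] using hx (hy hm)

section LieAlgebra

variable {R g : Type*} [CommRing R] [LieRing g] [LieAlgebra R g]

theorem LieHom.exists_apply_eq_of_lie_eq_self {L : Type*} [LieRing L] [LieAlgebra R L]
    {a b : g} (hli : LinearIndependent R ![a, b]) (hspan : Submodule.span R {a, b} = ⊤)
    (hab : ⁅a, b⁆ = b) {A B : L} (hAB : ⁅A, B⁆ = B) :
    ∃ φ : g →ₗ⁅R⁆ L, φ a = A ∧ φ b = B := by
  have hsp : ⊤ ≤ Submodule.span R (Set.range ![a, b]) := by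
    rw [Matrix.range_cons_cons_empty, hspan]
  let β : Module.Basis (Fin 2) R g := .mk hli hsp
  let F : g →ₗ[R] L := β.constr R ![A, B]
  have hF : ∀ i, F (![a, b] i) = ![A, B] i := fun i => by
    rw [← Module.Basis.mk_apply hli hsp, β.constr_basis]
  obtain ⟨hFa, hFb⟩ : F a = A ∧ F b = B := ⟨hF 0, hF 1⟩
  have hbracket : (LieModule.toEnd R g g : g →ₗ[R] Module.End R g).compr₂ F =
      (LieModule.toEnd R L L : L →ₗ[R] Module.End R L).compl₁₂ F F := by
    refine LinearMap.ext_basis β β fun i j => ?_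
    fin_cases i <;> fin_cases j <;>
      simp [β, hFa, hFb, hab, hAB, ← lie_skew b a, ← lie_skew B A]
  exact ⟨{ F with map_lie' := fun {x y} => LinearMap.congr_fun₂ hbracket x y }, hFa, hFb⟩

namespace UniversalEnvelopingAlgebra

attribute [local instance 100] LieRing.ofAssociativeRing

theorem adjoin_range_ι :
    Algebra.adjoin R (Set.range (ι R : g → UniversalEnvelopingAlgebra R g)) = ⊤ :=
  calc Algebra.adjoin R (Set.range (ι R))
      = (Algebra.adjoin R (Set.range (TensorAlgebra.ι R))).map (mkAlgHom R g) := by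
        rw [AlgHom.map_adjoin, ← Set.range_comp]; rfl
    _ = ⊤ := by
        rw [TensorAlgebra.adjoin_range_ι, Algebra.map_top, AlgHom.range_eq_top]
        exact RingCon.mkₐ_surjective _

theorem adjoin_image_ι_eq_top {s : Set g} (hs : Submodule.span R s = ⊤) :
    Algebra.adjoin R (ι R '' s) = ⊤ := by
  refine eq_top_iff.mpr (adjoin_range_ι (R := R) (g := g) ▸ Algebra.adjoin_le ?_)
  rintro _ ⟨x, rfl⟩
  have hx := Submodule.mem_map_of_mem (f := (ι R (L := g)).toLinearMap)
    (hs ▸ Submodule.mem_top : x ∈ Submodule.span R s)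
  rw [← Submodule.span_image] at hx
  exact Algebra.span_le_adjoin R _ hx

theorem semiconjBy_ι_of_lie_eq_self {a b : g} (hab : ⁅a, b⁆ = b) :
    SemiconjBy (ι R b) (ι R a) (ι R a - 1) := by
  have h := (ι R (L := g)).map_lie a b
  rw [hab, Ring.lie_def] at h
  rw [SemiconjBy, sub_mul, one_mul, eq_sub_iff_add_eq, ← eq_sub_iff_add_eq', ← h]

/-- An `Ideal` of a noncommutative ring is a left ideal: this is `U(g)(b - c)`. -/
abbrev whittakerIdeal (b : g) (c : R) : Ideal (UniversalEnvelopingAlgebra R g) :=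
  Ideal.span {ι R b - algebraMap R _ c}

variable (R) in
noncomputable def whittakerOfPoly (a b : g) (c : R) :
    R[X] →ₗ[R] UniversalEnvelopingAlgebra R g ⧸ whittakerIdeal b c :=
  (whittakerIdeal b c).mkQ.restrictScalars R ∘ₗ (aeval (ι R a)).toLinearMap

variable {a b : g} {c : R}

theorem whittakerOfPoly_apply (p : R[X]) :
    whittakerOfPoly R a b c p = Submodule.Quotient.mk (aeval (ι R a) p) := rfl

theorem whittakerOfPoly_X_mul (p : R[X]) :
    whittakerOfPoly R a b c (X * p) = ι R a • whittakerOfPoly R a b c p := by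
  rw [whittakerOfPoly_apply, whittakerOfPoly_apply, map_mul, aeval_X]
  rfl

theorem ι_smul_whittakerOfPoly (hab : ⁅a, b⁆ = b) (p : R[X]) :
    ι R b • whittakerOfPoly R a b c p = c • whittakerOfPoly R a b c (p.comp (X - C 1)) := by
  have hmem : ι R b - algebraMap R _ c ∈ whittakerIdeal b c := Ideal.subset_span rfl
  have hshift : aeval (ι R a - 1) p = aeval (ι R a) (p.comp (X - C 1)) := by
    rw [aeval_comp, map_sub, aeval_X, aeval_C, map_one]
  rw [whittakerOfPoly_apply, whittakerOfPoly_apply, ← Submodule.Quotient.mk_smul, smul_eq_mul,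
    (semiconjBy_ι_of_lie_eq_self hab).mul_aeval, hshift, ← Submodule.Quotient.mk_smul,
    Submodule.Quotient.eq, Algebra.smul_def, Algebra.commutes, ← mul_sub]
  exact (whittakerIdeal b c).mul_mem_left _ hmem

theorem whittakerOfPoly_surjective (hspan : Submodule.span R {a, b} = ⊤) (hab : ⁅a, b⁆ = b) :
    Function.Surjective (whittakerOfPoly R a b c) := by
  have hgen : Algebra.adjoin R {ι R a, ι R b} = ⊤ := by
    rw [← Set.image_pair, adjoin_image_ι_eq_top hspan]
  have hstable : ∀ u : UniversalEnvelopingAlgebra R g,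
      ∀ m ∈ LinearMap.range (whittakerOfPoly R a b c),
        u • m ∈ LinearMap.range (whittakerOfPoly R a b c) := by
    refine Submodule.smul_mem_of_adjoin_eq_top hgen ?_
    rintro x (rfl | rfl) _ ⟨p, rfl⟩
    · exact ⟨X * p, whittakerOfPoly_X_mul p⟩
    · exact ⟨c • p.comp (X - C 1), by rw [map_smul, ι_smul_whittakerOfPoly hab]⟩
  intro m
  obtain ⟨u, rfl⟩ := Submodule.Quotient.mk_surjective _ m
  have hu := hstable u _ ⟨1, rfl⟩
  rwa [whittakerOfPoly_apply, map_one, ← Submodule.Quotient.mk_smul, smul_eq_mul, mul_one] at hu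

theorem whittakerOfPoly_injective (hli : LinearIndependent R ![a, b])
    (hspan : Submodule.span R {a, b} = ⊤) (hab : ⁅a, b⁆ = b) :
    Function.Injective (whittakerOfPoly R a b c) := by
  let A : Module.End R R[X] := Algebra.lmul R R[X] X
  let B : Module.End R R[X] := c • (aeval (X - C 1)).toLinearMap
  have hAB : ⁅A, B⁆ = B := by
    refine LinearMap.ext fun f => ?_
    simp only [Ring.lie_def, LinearMap.sub_apply, Module.End.mul_apply, A, B,
      Algebra.coe_lmul_eq_mul, LinearMap.smul_apply, AlgHom.toLinearMap_apply,
      LinearMap.mul_apply_apply, Algebra.mul_smul_comm, map_mul, aeval_X, map_one]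
    rw [← smul_sub, ← sub_mul, sub_sub_cancel, one_mul]
  obtain ⟨φ, hφa, hφb⟩ := LieHom.exists_apply_eq_of_lie_eq_self hli hspan hab hAB
  let ρ := lift R φ
  have hρt : ρ (ι R b - algebraMap R _ c) 1 = 0 := by
    simp [ρ, hφb, B]
  refine (injective_iff_map_eq_zero _).mpr fun p hp => ?_
  rw [whittakerOfPoly_apply, Submodule.Quotient.mk_eq_zero] at hp
  obtain ⟨u, hu⟩ := Ideal.mem_span_singleton'.mp hp
  calc p = ρ (aeval (ι R a) p) 1 := by
        rw [← aeval_algHom_apply, lift_ι_apply, hφa, aeval_algHom_apply, aeval_X_left_apply]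
        exact (mul_one p).symm
    _ = 0 := by rw [← hu, map_mul, Module.End.mul_apply, hρt, map_zero]

end UniversalEnvelopingAlgebra

end LieAlgebra

/-- Let `g` be the two-dimensional complex Lie algebra with basis `{a, b}`
and bracket `[a,b] = b`, and let `λ ∈ ℂ`, `λ ≠ 0`.  Then the standard Whittaker module
`M_λ = U(g)/U(g)(b − λ)` is simple. -/
theorem standard_whittaker_module_simple_sl2_borel
    {g : Type*} [LieRing g] [LieAlgebra ℂ g] (a b : g)
    (hli : LinearIndependent ℂ ![a, b]) (hspan : Submodule.span ℂ {a, b} = ⊤)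
    (hab : ⁅a, b⁆ = b) (lam : ℂ) (hlam : lam ≠ 0) :
    IsSimpleModule (UniversalEnvelopingAlgebra ℂ g)
      (UniversalEnvelopingAlgebra ℂ g ⧸
        (Ideal.span {UniversalEnvelopingAlgebra.ι ℂ b -
          algebraMap ℂ (UniversalEnvelopingAlgebra ℂ g) lam} :
          Ideal (UniversalEnvelopingAlgebra ℂ g))) := by
  have hy : ∀ p : ℂ[X], whittakerOfPoly ℂ a b lam (p.comp (X - C 1)) =
      (lam⁻¹ • ι ℂ b) • whittakerOfPoly ℂ a b lam p := fun p => by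
    rw [smul_assoc, ι_smul_whittakerOfPoly hab, smul_smul, inv_mul_cancel₀ hlam, one_smul]
  exact isSimpleModule_of_polynomialEquiv
    (.ofBijective _ ⟨whittakerOfPoly_injective hli hspan hab, whittakerOfPoly_surjective hspan hab⟩)
    one_ne_zero _ _ whittakerOfPoly_X_mul hy
end
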